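/- arXiv:1509.00730 — 2 statements merged into one kernel-verified Lean document; each statement's English description precedes it below -/
import Mathlib

section
/- For the Kepler system, the Poisson bracket of two components of the Lenz vector satisfies {A_i, A_j} = -2H ε_{ijk} M_k, where H = (1/2)|p|² - γ/|q|. -/
open scoped BigOperators

/-- Phase space ℝ⁶ = {(p, q)} of the Kepler system. -/
abbrev KPhase := (Fin 3 → ℝ) × (Fin 3 → ℝ)

/-- Partial derivative in the direction of the momentum coordinate `p_i`. -/
noncomputable def dP (f : KPhase → ℝ) (i : Fin 3) (z : KPhase) : ℝ :=
  fderiv ℝ f z (Pi.single i 1, 0)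

/-- Partial derivative in the direction of the position coordinate `q^i`. -/
noncomputable def dQ (f : KPhase → ℝ) (i : Fin 3) (z : KPhase) : ℝ :=
  fderiv ℝ f z (0, Pi.single i 1)

/-- Canonical Poisson bracket {f,g} = Σ_i (∂f/∂p_i ∂g/∂q^i - ∂f/∂q^i ∂g/∂p_i). -/
noncomputable def pb (f g : KPhase → ℝ) (z : KPhase) : ℝ :=
  ∑ i : Fin 3, (dP f i z * dQ g i z - dQ f i z * dP g i z)

/-- |q| -/
noncomputable def normQ (z : KPhase) : ℝ := Real.sqrt (∑ i, z.2 i ^ 2)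

/-- Kepler Hamiltonian H = (1/2)|p|² - γ/|q|. -/
noncomputable def kH (γ : ℝ) (z : KPhase) : ℝ :=
  (1 / 2) * ∑ i, z.1 i ^ 2 - γ / normQ z

/-- Angular momentum M = p × q (cyclic: M_i = p_{i+1} q^{i+2} - p_{i+2} q^{i+1}). -/
def kM (i : Fin 3) (z : KPhase) : ℝ :=
  z.1 (i + 1) * z.2 (i + 2) - z.1 (i + 2) * z.2 (i + 1)

/-- Lenz vector A = p × M + γ q/|q|. -/
noncomputable def kA (γ : ℝ) (i : Fin 3) (z : KPhase) : ℝ :=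
  z.1 (i + 1) * kM (i + 2) z - z.1 (i + 2) * kM (i + 1) z + γ * z.2 i / normQ z

/-- Levi-Civita symbol on indices 0,1,2 (ε₀₁₂ = 1). -/
noncomputable def eps (i j k : Fin 3) : ℝ :=
  (((j : ℕ) : ℝ) - ((i : ℕ) : ℝ)) * (((k : ℕ) : ℝ) - ((i : ℕ) : ℝ)) *
    (((k : ℕ) : ℝ) - ((j : ℕ) : ℝ)) / 2

noncomputable def Lp (a : Fin 3) : KPhase →L[ℝ] ℝ :=
  (ContinuousLinearMap.proj a).comp (ContinuousLinearMap.fst ℝ (Fin 3 → ℝ) (Fin 3 → ℝ))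
noncomputable def Lq (a : Fin 3) : KPhase →L[ℝ] ℝ :=
  (ContinuousLinearMap.proj a).comp (ContinuousLinearMap.snd ℝ (Fin 3 → ℝ) (Fin 3 → ℝ))
lemma hasFDerivAt_p (a : Fin 3) (z : KPhase) : HasFDerivAt (fun z : KPhase => z.1 a) (Lp a) z :=
  (Lp a).hasFDerivAt
lemma hasFDerivAt_q (a : Fin 3) (z : KPhase) : HasFDerivAt (fun z : KPhase => z.2 a) (Lq a) z :=
  (Lq a).hasFDerivAt
lemma hasFDerivAt_S (z : KPhase) :
    HasFDerivAt (fun z : KPhase => ∑ i : Fin 3, z.2 i ^ 2)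
      (∑ i : Fin 3, (z.2 i • Lq i + z.2 i • Lq i)) z := by
  have h : (fun z : KPhase => ∑ i : Fin 3, z.2 i ^ 2)
      = fun z : KPhase => ∑ i : Fin 3, z.2 i * z.2 i := by
    funext z; congr 1; funext i; ring
  rw [h]
  exact HasFDerivAt.sum (fun (i : Fin 3) (_ : i ∈ Finset.univ) =>
    (hasFDerivAt_q i z).mul (hasFDerivAt_q i z))
lemma hasFDerivAt_normQ (z : KPhase) (h0 : (∑ i : Fin 3, z.2 i ^ 2) ≠ 0) :
    HasFDerivAt normQ ((1 / (2 * Real.sqrt (∑ i : Fin 3, z.2 i ^ 2))) •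
      (∑ i : Fin 3, (z.2 i • Lq i + z.2 i • Lq i))) z :=
  (Real.hasDerivAt_sqrt h0).comp_hasFDerivAt z (hasFDerivAt_S z)
lemma hasFDerivAt_kM (k : Fin 3) (z : KPhase) :
    HasFDerivAt (kM k)
      (z.1 (k+1) • Lq (k+2) + z.2 (k+2) • Lp (k+1) -
        (z.1 (k+2) • Lq (k+1) + z.2 (k+1) • Lp (k+2))) z :=
  ((hasFDerivAt_p (k+1) z).mul (hasFDerivAt_q (k+2) z)).sub
    ((hasFDerivAt_p (k+2) z).mul (hasFDerivAt_q (k+1) z))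
lemma dP_kM (k a : Fin 3) (z : KPhase) :
    dP (kM k) a z = (Pi.single a 1 : Fin 3 → ℝ) (k+1) * z.2 (k+2) - (Pi.single a 1 : Fin 3 → ℝ) (k+2) * z.2 (k+1) := by
  rw [dP, (hasFDerivAt_kM k z).fderiv]
  simp [Lp, Lq]
  ring
lemma dQ_kM (k a : Fin 3) (z : KPhase) :
    dQ (kM k) a z = z.1 (k+1) * (Pi.single a 1 : Fin 3 → ℝ) (k+2) - z.1 (k+2) * (Pi.single a 1 : Fin 3 → ℝ) (k+1) := by
  rw [dQ, (hasFDerivAt_kM k z).fderiv]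
  simp [Lp, Lq]


lemma sum_sq_pos (z : KPhase) (hq : z.2 ≠ 0) : 0 < ∑ i : Fin 3, z.2 i ^ 2 := by
  obtain ⟨i, hi⟩ := Function.ne_iff.mp hq
  exact Finset.sum_pos' (fun k _ => sq_nonneg _)
    ⟨i, Finset.mem_univ i, lt_of_le_of_ne (sq_nonneg _) (Ne.symm (pow_ne_zero 2 hi))⟩

lemma normQ_ne_zero (z : KPhase) (hq : z.2 ≠ 0) : normQ z ≠ 0 := by
  simpa [normQ] using (Real.sqrt_pos.mpr (sum_sq_pos z hq)).ne'

lemma dP_kA (γ : ℝ) (i a : Fin 3) (z : KPhase) (hq : z.2 ≠ 0) :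
    dP (kA γ i) a z =
      (Pi.single a 1 : Fin 3 → ℝ) (i+1) * kM (i+2) z + z.1 (i+1) * dP (kM (i+2)) a z
      - ((Pi.single a 1 : Fin 3 → ℝ) (i+2) * kM (i+1) z + z.1 (i+2) * dP (kM (i+1)) a z) := by
  have hS := (sum_sq_pos z hq).ne'
  have hr0 : Real.sqrt (∑ i : Fin 3, z.2 i ^ 2) ≠ 0 := normQ_ne_zero z hq
  have hinv := (hasDerivAt_inv hr0).comp_hasFDerivAt z (hasFDerivAt_normQ z hS)
  have h := (((hasFDerivAt_p (i+1) z).mul (hasFDerivAt_kM (i+2) z)).sub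
    ((hasFDerivAt_p (i+2) z).mul (hasFDerivAt_kM (i+1) z))).add
    (((hasFDerivAt_q i z).const_mul γ).mul hinv)
  have h' : fderiv ℝ (kA γ i) z = _ := h.fderiv
  rw [dP, h', dP_kM, dP_kM]
  simp [Lp, Lq]
  ring

lemma dQ_kA (γ : ℝ) (i a : Fin 3) (z : KPhase) (hq : z.2 ≠ 0) :
    dQ (kA γ i) a z =
      z.1 (i+1) * dQ (kM (i+2)) a z - z.1 (i+2) * dQ (kM (i+1)) a z
      + γ * (Pi.single a 1 : Fin 3 → ℝ) i / normQ z
      - γ * z.2 i * z.2 a / (normQ z * ∑ k : Fin 3, z.2 k ^ 2) := by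
  have hSpos := sum_sq_pos z hq
  have hS := hSpos.ne'
  have hr0 : Real.sqrt (∑ i : Fin 3, z.2 i ^ 2) ≠ 0 := normQ_ne_zero z hq
  have hinv := (hasDerivAt_inv hr0).comp_hasFDerivAt z (hasFDerivAt_normQ z hS)
  have h := (((hasFDerivAt_p (i+1) z).mul (hasFDerivAt_kM (i+2) z)).sub
    ((hasFDerivAt_p (i+2) z).mul (hasFDerivAt_kM (i+1) z))).add
    (((hasFDerivAt_q i z).const_mul γ).mul hinv)
  have h' : fderiv ℝ (kA γ i) z = _ := h.fderiv
  have hr2 : Real.sqrt (∑ i : Fin 3, z.2 i ^ 2) ^ 2 = ∑ i : Fin 3, z.2 i ^ 2 :=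
    Real.sq_sqrt hSpos.le
  rw [dQ, h', dQ_kM, dQ_kM]
  rcases eq_or_ne i a with hia | hia <;>
  simp [Lp, Lq, normQ, Pi.single_apply, hia, mul_ite, ite_mul, mul_add, add_div,
    div_eq_mul_inv, zero_mul, mul_zero, Finset.sum_add_distrib, Finset.sum_ite_eq',
    Finset.sum_ite_eq] <;>
  simp only [hr2] <;>
  field_simp <;>
  ring

set_option maxHeartbeats 2000000 in
/-- {A_i, A_j} = -2H ε_{ijk} M_k. -/
theorem kepler_lenz_bracket (γ : ℝ) (z : KPhase) (hq : z.2 ≠ 0) (i j : Fin 3) :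
    pb (kA γ i) (kA γ j) z = -2 * kH γ z * ∑ k, eps i j k * kM k z := by
  have hSpos := sum_sq_pos z hq
  have hq2 : z.2 0 ^ 2 + z.2 1 ^ 2 + z.2 2 ^ 2 ≠ 0 := by
    have := hSpos; rw [Fin.sum_univ_three] at this; exact this.ne'
  have hr0' : Real.sqrt (z.2 0 ^ 2 + z.2 1 ^ 2 + z.2 2 ^ 2) ≠ 0 := by
    have := normQ_ne_zero z hq; rw [normQ, Fin.sum_univ_three] at this; exact this
  have hcase : ∀ m : Fin 3, m = 0 ∨ m = 1 ∨ m = 2 := by decide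
  rcases hcase i with hi | hi | hi <;> rcases hcase j with hj | hj | hj <;> subst hi hj <;>
  · simp only [pb, kH, eps, Fin.sum_univ_three, dP_kA _ _ _ _ hq, dQ_kA _ _ _ _ hq,
      dP_kM, dQ_kM, kM, normQ,
      show (0:Fin 3)+1 = 1 from rfl, show (0:Fin 3)+2 = 2 from rfl,
      show (1:Fin 3)+1 = 2 from rfl, show (1:Fin 3)+2 = 0 from rfl,
      show (2:Fin 3)+1 = 0 from rfl, show (2:Fin 3)+2 = 1 from rfl,
      Pi.single_apply,
      show ¬((0:Fin 3) = 1) from by decide, show ¬((0:Fin 3) = 2) from by decide,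
      show ¬((1:Fin 3) = 0) from by decide, show ¬((1:Fin 3) = 2) from by decide,
      show ¬((2:Fin 3) = 0) from by decide, show ¬((2:Fin 3) = 1) from by decide,
      if_true, if_false, eq_self_iff_true, ite_true, ite_false,
      show (((0:Fin 3):ℕ):ℝ) = 0 from by norm_num, show (((1:Fin 3):ℕ):ℝ) = 1 from by norm_num,
      show (((2:Fin 3):ℕ):ℝ) = 2 from by norm_num,
      mul_zero, zero_mul, mul_one, one_mul, add_zero, zero_add, sub_zero, zero_sub, neg_zero]
    field_simp
    ring
end

section
/- Let G be a group acting on G × G diagonally by conjugation. Fix (x, y) ∈ G × G. The fiber through the orbit of (x,y) of the map (x,y) ↦ (conjugation orbit of (x, y x⁻¹ y⁻¹)) is exactly the set of orbits of pairs (x, y z) with z ∈ Z_x: i.e., (x', y') satisfies that (x', y' x'⁻¹ y'⁻¹) is diagonally conjugate to (x, y x⁻¹ y⁻¹) if and only if there exist g ∈ G and z ∈ Z_x with x' = g x g⁻¹ and y' = g y z g⁻¹. -/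
/-- the fiber of G(x,y) ↦ G(x, yx⁻¹y⁻¹) through G(x,y) consists of the
orbits of the pairs (x, yz) with z ∈ Z_x. -/
theorem fiber_of_CM_projection {G : Type*} [Group G] (x y x' y' : G) :
    (∃ g : G, x' = g * x * g⁻¹ ∧
        y' * x'⁻¹ * y'⁻¹ = g * (y * x⁻¹ * y⁻¹) * g⁻¹) ↔
    (∃ g z : G, Commute z x ∧ x' = g * x * g⁻¹ ∧ y' = g * (y * z) * g⁻¹) := by
  constructor
  · rintro ⟨g, hx, hy⟩
    refine ⟨g, y⁻¹ * g⁻¹ * y' * g, ?_, hx, by group⟩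
    subst hx
    have h : (y⁻¹ * g⁻¹ * y' * g) * x⁻¹ * (y⁻¹ * g⁻¹ * y' * g)⁻¹ = x⁻¹ := by
      have h3 := congrArg (fun w => y⁻¹ * g⁻¹ * w * g * y) hy
      group at h3 ⊢
      exact h3
    have h2 : (y⁻¹ * g⁻¹ * y' * g) * x⁻¹ = x⁻¹ * (y⁻¹ * g⁻¹ * y' * g) := by
      conv_rhs => rw [← h]
      group
    have : Commute (y⁻¹ * g⁻¹ * y' * g) x⁻¹ := h2
    simpa using this.inv_right
  · rintro ⟨g, z, hz, hx, hy⟩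
    refine ⟨g, hx, ?_⟩
    subst hx hy
    have hz' : z * x⁻¹ = x⁻¹ * z := (hz.inv_right).eq
    calc g * (y * z) * g⁻¹ * (g * x * g⁻¹)⁻¹ * (g * (y * z) * g⁻¹)⁻¹
        = g * (y * (z * x⁻¹ * z⁻¹) * y⁻¹) * g⁻¹ := by group
      _ = g * (y * x⁻¹ * y⁻¹) * g⁻¹ := by rw [hz']; group
end
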